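/- Let Z ~ N(θ, σ²). For candidate θ ≥ 0, define the acceptance region A(θ) = [-σ z_{α/2}, ū(θ)], where ū(θ) is chosen so that P_θ(-σ z_{α/2} ≤ Z ≤ ū(θ)) = 1 - α. Then ū(θ) exists uniquely for each θ ≥ 0, ū(0) = σ z_{α/2}, ū is strictly increasing, and ū(θ) - (θ + σ z_α) → 0 as θ → ∞. -/

import Mathlib

open MeasureTheory ProbabilityTheory Filter

/-- Standard normal CDF. -/
noncomputable def Phi (x : ℝ) : ℝ := ((gaussianReal 0 1) (Set.Iic x)).toReal

noncomputable abbrev phi : ℝ → ℝ := gaussianPDFReal 0 1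

lemma phi_pos (x : ℝ) : 0 < phi x := gaussianPDFReal_pos 0 1 x one_ne_zero

lemma phi_integrable : Integrable phi := integrable_gaussianPDFReal 0 1

lemma phi_intervalIntegrable (a b : ℝ) : IntervalIntegrable phi volume a b :=
  phi_integrable.intervalIntegrable

lemma Phi_eq (x : ℝ) : Phi x = ∫ t in Set.Iic x, phi t := by
  rw [Phi, gaussianReal_apply_eq_integral 0 one_ne_zero,
    ENNReal.toReal_ofReal (integral_nonneg fun t => (phi_pos t).le)]

lemma Phi_sub (a b : ℝ) : Phi b - Phi a = ∫ t in a..b, phi t := by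
  rw [Phi_eq, Phi_eq]
  exact intervalIntegral.integral_Iic_sub_Iic phi_integrable.integrableOn phi_integrable.integrableOn

lemma Phi_strictMono : StrictMono Phi := by
  intro a b hab
  have := intervalIntegral.intervalIntegral_pos_of_pos_on (phi_intervalIntegrable a b)
    (fun x _ => phi_pos x) hab
  have h := Phi_sub a b
  linarith

lemma Phi_continuous : Continuous Phi := by
  have : Phi = fun x => (∫ t in (0:ℝ)..x, phi t) + Phi 0 := by
    ext x
    have := Phi_sub 0 x
    linarith
  rw [this]
  exact (phi_integrable.continuous_primitive 0).add continuous_const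

lemma Phi_tendsto_atTop : Tendsto Phi atTop (nhds 1) := by
  have h := tendsto_measure_Iic_atTop (gaussianReal 0 1)
  simp only [measure_univ] at h
  have := (ENNReal.tendsto_toReal ENNReal.one_ne_top).comp h
  show Tendsto (fun x => ((gaussianReal 0 1) (Set.Iic x)).toReal) atTop (nhds 1)
  simpa [Phi, Function.comp_def] using this

lemma Phi_neg (x : ℝ) : Phi (-x) = 1 - Phi x := by
  have heven : ∀ t : ℝ, phi (-t) = phi t := by
    intro t
    simp [gaussianPDFReal, neg_sq]
  have h1 : Phi (-x) = ∫ t in Set.Ioi x, phi t := by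
    calc Phi (-x) = ∫ t in Set.Iic (-x), phi t := Phi_eq _
    _ = ∫ t in Set.Iic (-x), phi (-t) :=
      (setIntegral_congr_fun measurableSet_Iic fun t _ => (heven t).symm)
    _ = ∫ t in Set.Ioi x, phi t := by simpa using integral_comp_neg_Iic (-x) phi
  have h2 : Phi x + ∫ t in Set.Ioi x, phi t = 1 := by
    rw [Phi_eq, intervalIntegral.integral_Iic_add_Ioi phi_integrable.integrableOn phi_integrable.integrableOn,
      integral_gaussianPDFReal_eq_one 0 one_ne_zero]
  linarith [h1, h2]

lemma Phi_tendsto_atBot : Tendsto Phi atBot (nhds 0) := by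
  have : Tendsto (fun x => 1 - Phi (-x)) atBot (nhds 0) := by
    have h : Tendsto (fun x : ℝ => -x) atBot atTop := tendsto_neg_atBot_atTop
    have := (Phi_tendsto_atTop.comp h).const_sub 1
    simpa using this
  refine this.congr fun x => ?_
  rw [Phi_neg]; ring

lemma Phi_lt_one (x : ℝ) : Phi x < 1 := by
  have h1 : Phi (x + 1) ≤ 1 :=
    Phi_strictMono.monotone.ge_of_tendsto Phi_tendsto_atTop (x + 1)
  have := Phi_strictMono (lt_add_one x)
  linarith

lemma Phi_pos' (x : ℝ) : 0 < Phi x := by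
  have h1 : 0 ≤ Phi (x - 1) :=
    Phi_strictMono.monotone.le_of_tendsto Phi_tendsto_atBot (x - 1)
  have := Phi_strictMono (sub_one_lt x)
  linarith

lemma Phi_surj {p : ℝ} (h0 : 0 < p) (h1 : p < 1) : ∃ x, Phi x = p := by
  obtain ⟨a, ha⟩ := (Phi_tendsto_atBot.eventually_lt_const h0).exists
  obtain ⟨b, hb⟩ := (Phi_tendsto_atTop.eventually_const_lt h1).exists
  have := intermediate_value_univ a b Phi_continuous
  obtain ⟨x, hx⟩ := this ⟨ha.le, hb.le⟩
  exact ⟨x, hx⟩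

lemma phi_lt_phi {s t : ℝ} (h : t ^ 2 < s ^ 2) : phi s < phi t := by
  have hpos : (0:ℝ) < (√(2 * Real.pi * (1:NNReal)))⁻¹ := by
    rw [inv_pos]
    apply Real.sqrt_pos.2
    positivity
  simp only [phi, gaussianPDFReal, sub_zero]
  apply mul_lt_mul_of_pos_left _ hpos
  apply Real.exp_lt_exp.2
  have : ((1:NNReal):ℝ) = 1 := rfl
  rw [this]
  nlinarith

/-- The upper limit `ū(θ)` of the asymmetric acceptance region
`[-σ z_{α/2}, ū(θ)]` with `P_θ(-σ z_{α/2} ≤ Z ≤ ū(θ)) = 1 - α`: existence,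
uniqueness, `ū(0) = σ z_{α/2}`, strict increase, and `ū(θ) - (θ + σ z_α) → 0`. -/
theorem stmt10 (σ α zα zα2 : ℝ) (hσ : 0 < σ) (hα : α ∈ Set.Ioo (0 : ℝ) (1/2))
    (hzα : Phi zα = 1 - α) (hzα2 : Phi zα2 = 1 - α / 2) :
    ∃ U : ℝ → ℝ,
      (∀ θ ∈ Set.Ici (0 : ℝ),
        Phi ((U θ - θ) / σ) - Phi ((-(σ * zα2) - θ) / σ) = 1 - α ∧
        ∀ u : ℝ, Phi ((u - θ) / σ) - Phi ((-(σ * zα2) - θ) / σ) = 1 - α → u = U θ) ∧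
      U 0 = σ * zα2 ∧
      StrictMonoOn U (Set.Ici (0 : ℝ)) ∧
      Tendsto (fun θ => U θ - (θ + σ * zα)) atTop (nhds 0) := by
  classical
  obtain ⟨hα0, hα2⟩ := hα
  have hσ' : σ ≠ 0 := hσ.ne'
  have hPhi0 : Phi 0 = 1/2 := by have := Phi_neg 0; rw [neg_zero] at this; linarith
  have hzα_pos : 0 < zα := Phi_strictMono.lt_iff_lt.1 (by rw [hPhi0, hzα]; linarith)
  have hzlt : zα < zα2 := Phi_strictMono.lt_iff_lt.1 (by rw [hzα, hzα2]; linarith)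
  have hzα2_pos : 0 < zα2 := hzα_pos.trans hzlt
  have hPhinz : Phi (-zα2) = α/2 := by rw [Phi_neg, hzα2]; ring
  set ℓ : ℝ := -(σ * zα2) with hℓ
  set c : ℝ → ℝ := fun θ => 1 - α + Phi ((ℓ - θ)/σ) with hc
  have hc_le : ∀ θ : ℝ, 0 ≤ θ → c θ ≤ 1 - α/2 := by
    intro θ hθ
    have harg : (ℓ - θ)/σ ≤ -zα2 := by
      rw [div_le_iff₀ hσ]
      have : -zα2 * σ = ℓ := by rw [hℓ]; ring
      linarith
    have := Phi_strictMono.monotone harg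
    rw [hPhinz] at this
    simp only [hc]
    linarith
  have hc_gt : ∀ θ : ℝ, 1 - α < c θ := by
    intro θ
    have := Phi_pos' ((ℓ - θ)/σ)
    simp only [hc]
    linarith
  set x : ℝ → ℝ := fun θ => if h : ∃ y, Phi y = c θ then h.choose else 0 with hxdef
  have hx : ∀ θ : ℝ, 0 ≤ θ → Phi (x θ) = c θ := by
    intro θ hθ
    have h : ∃ y, Phi y = c θ :=
      Phi_surj (by have := hc_gt θ; linarith)
        (lt_of_le_of_lt (hc_le θ hθ) (by linarith))
    simp only [hxdef, dif_pos h]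
    exact h.choose_spec
  have hxgt : ∀ θ : ℝ, 0 ≤ θ → zα < x θ := by
    intro θ hθ
    apply Phi_strictMono.lt_iff_lt.1
    rw [hzα, hx θ hθ]
    exact hc_gt θ
  have hxle : ∀ θ : ℝ, 0 ≤ θ → x θ ≤ zα2 := by
    intro θ hθ
    apply Phi_strictMono.le_iff_le.1
    rw [hzα2, hx θ hθ]
    exact hc_le θ hθ
  have key : ∀ θ : ℝ, (θ + σ * x θ - θ)/σ = x θ := by intro θ; field_simp; ring
  refine ⟨fun θ => θ + σ * x θ, fun θ hθ => ?_, ?_, ?_, ?_⟩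
  · have hθ : (0:ℝ) ≤ θ := hθ
    constructor
    · show Phi ((θ + σ * x θ - θ) / σ) - Phi ((ℓ - θ) / σ) = 1 - α
      rw [key θ, hx θ hθ]
      simp only [hc]
      ring
    · intro u hu
      have h1 : Phi ((u - θ)/σ) = c θ := by
        simp only [hc]
        linarith [hu]
      have h2 : (u - θ)/σ = x θ :=
        Phi_strictMono.injective (h1.trans (hx θ hθ).symm)
      rw [div_eq_iff hσ'] at h2
      show u = θ + σ * x θ
      linarith
  · show (0:ℝ) + σ * x 0 = σ * zα2
    have h1 : Phi (x 0) = c 0 := hx 0 le_rfl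
    have h2 : c 0 = Phi zα2 := by
      have harg : (ℓ - 0)/σ = -zα2 := by rw [hℓ]; field_simp; ring
      simp only [hc, harg, hPhinz, hzα2]
      ring
    have := Phi_strictMono.injective (h1.trans h2)
    rw [this]
    ring
  · intro θ1 h1 θ2 h2 h12
    have h1 : (0:ℝ) ≤ θ1 := h1
    have h2 : (0:ℝ) ≤ θ2 := h2
    show θ1 + σ * x θ1 < θ2 + σ * x θ2
    set u : ℝ := θ1 + σ * x θ1 with hu
    set a1 : ℝ := (ℓ - θ1)/σ with ha1
    set a2 : ℝ := (ℓ - θ2)/σ with ha2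
    set b1 : ℝ := (u - θ1)/σ with hb1
    set b2 : ℝ := (u - θ2)/σ with hb2
    have hb1x : b1 = x θ1 := key θ1
    set L : ℝ := b1 - a1 with hL
    have hLa2 : b2 - L = a2 := by rw [hL, hb1, hb2, ha1, ha2]; field_simp; try ring
    have ha1v : a1 = -zα2 - θ1/σ := by rw [ha1, hℓ]; field_simp; try ring
    have hb2b1 : b2 < b1 := by
      rw [hb1, hb2, div_lt_div_iff_of_pos_right hσ]
      linarith
    have hint2 : IntervalIntegrable (fun t => phi (t - L)) volume b2 b1 :=
      (phi_integrable.comp_sub_right L).intervalIntegrable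
    have hpos : 0 < ∫ t in b2..b1, (phi t - phi (t - L)) := by
      apply intervalIntegral.intervalIntegral_pos_of_pos_on
        ((phi_intervalIntegrable b2 b1).sub hint2) _ hb2b1
      intro t ht
      have ht1 : t < b1 := ht.2
      have hxb : x θ1 ≤ zα2 := hxle θ1 h1
      have hLval : L = x θ1 + zα2 + θ1/σ := by
        rw [hL, hb1x, ha1v]; ring
      have h2t : 2 * t < L := by
        have hθσ : 0 ≤ θ1/σ := div_nonneg h1 hσ.le
        rw [hLval]
        have : t < x θ1 := hb1x ▸ ht1
        linarith
      have hLpos : 0 < L := by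
        have := hxgt θ1 h1
        have hθσ : 0 ≤ θ1/σ := div_nonneg h1 hσ.le
        rw [hLval]; linarith
      have : t^2 < (t - L)^2 := by nlinarith
      have := phi_lt_phi this
      linarith
    have hsub : (∫ t in b2..b1, phi (t - L)) = ∫ t in a2..a1, phi t := by
      rw [intervalIntegral.integral_comp_sub_right (fun t => phi t) L, hLa2]
      congr 1
      rw [hL]; ring
    have hsplit : (∫ t in b2..b1, (phi t - phi (t - L)))
        = (∫ t in b2..b1, phi t) - ∫ t in b2..b1, phi (t - L) :=
      intervalIntegral.integral_sub (phi_intervalIntegrable b2 b1) hint2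
    have hPb : Phi b1 - Phi b2 = ∫ t in b2..b1, phi t := Phi_sub b2 b1
    have hPa : Phi a1 - Phi a2 = ∫ t in a2..a1, phi t := Phi_sub a2 a1
    have hmain : Phi b2 - Phi a2 < Phi b1 - Phi a1 := by linarith
    have heq1 : Phi b1 - Phi a1 = 1 - α := by
      rw [hb1x, hx θ1 h1, ha1]
      simp only [hc]; ring
    have heq2 : Phi (x θ2) - Phi a2 = 1 - α := by
      rw [hx θ2 h2, ha2]
      simp only [hc]; ring
    have hlt : Phi b2 < Phi (x θ2) := by linarith
    have := Phi_strictMono.lt_iff_lt.1 hlt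
    rw [hb2, div_lt_iff₀ hσ] at this
    linarith
  · have htb : Tendsto (fun θ : ℝ => (ℓ - θ)/σ) atTop atBot := by
      apply Tendsto.atBot_div_const hσ
      exact tendsto_atBot_add_const_left atTop ℓ tendsto_neg_atTop_atBot |>.congr
        (fun θ => by ring)
    have hPhi_to0 : Tendsto (fun θ => Phi ((ℓ - θ)/σ)) atTop (nhds 0) :=
      Phi_tendsto_atBot.comp htb
    have hxt : Tendsto x atTop (nhds zα) := by
      rw [tendsto_order]
      constructor
      · intro b hb
        filter_upwards [eventually_ge_atTop (0:ℝ)] with θ hθ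
        exact hb.trans (hxgt θ hθ)
      · intro b hb
        have hε : 0 < Phi b - (1 - α) := by
          have := Phi_strictMono hb
          rw [hzα] at this; linarith
        filter_upwards [hPhi_to0.eventually_lt_const hε, eventually_ge_atTop (0:ℝ)]
          with θ hle hθ
        have : Phi (x θ) < Phi b := by
          rw [hx θ hθ]
          simp only [hc]
          linarith
        exact Phi_strictMono.lt_iff_lt.1 this
    have h := (hxt.sub_const zα).const_mul σ
    simp only [sub_self, mul_zero] at h
    refine h.congr fun θ => ?_
    show σ * (x θ - zα) = θ + σ * x θ - (θ + σ * zα)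
    ring
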